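/- arXiv:2309.00418 — 2 statements merged into one kernel-verified Lean document; each statement's English description precedes it below -/
import Mathlib

section
/- Let ε₀ ∈ (0,1), τ > 0, and suppose g, m : [ε₀,1] → ℝ are C¹ with g ≥ 1, m > 1, g(ε₀) = 1, and they satisfy (1/g - 1/g³)g' + (1/m - 1/m³)m' + (1/τ)(1/g - 1/m) = 4/r on [ε₀,1]. Then for all r ∈ [ε₀,1]: w(m(r)) - w(m(ε₀)) ≤ -w(g(r)) + 1/2 + 1/τ - 4 ln ε₀, where w(h) = ln h + 1/(2h²). -/
/-!
Along a solution, `V(s) = w(g s) + w(m s) - 4 log s - s / τ` is nonincreasing: since `w' h = 1/h - 1/h³`,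
the equation gives `V' = -(1/τ) (1/g - 1/m + 1) ≤ 0` because `g > 0` and `m ≥ 1`. Comparing `V r` with
`V ε₀`, using `w 1 = 1/2`, `log r ≤ 0` and `r - ε₀ ≤ 1`, gives the bound.
-/

noncomputable def w (h : ℝ) : ℝ := Real.log h + 1 / (2 * h ^ 2)

theorem w_one : w 1 = 1 / 2 := by
  norm_num [w]

theorem hasDerivAt_w {h : ℝ} (hh : h ≠ 0) : HasDerivAt w (1 / h - 1 / h ^ 3) h := by
  have hw : w = fun x => Real.log x + (2 * x ^ 2)⁻¹ := by
    funext x; simp [w]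
  rw [hw]
  refine ((Real.hasDerivAt_log hh).fun_add
    (((hasDerivAt_pow 2 h).const_mul 2).fun_inv (by positivity))).congr_deriv ?_
  field_simp
  ring

theorem HasDerivAt.w_comp {f : ℝ → ℝ} {f' r : ℝ} (hf : HasDerivAt f f' r) (hr : f r ≠ 0) :
    HasDerivAt (fun s => w (f s)) ((1 / f r - 1 / f r ^ 3) * f') r :=
  (hasDerivAt_w hr).comp r hf

theorem antitoneOn_w_add_w_sub_log_sub_div {a b τ : ℝ} {g m g' m' : ℝ → ℝ} (ha : 0 < a) (hτ : 0 < τ)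
    (hgd : ∀ r ∈ Set.Icc a b, HasDerivAt g (g' r) r)
    (hmd : ∀ r ∈ Set.Icc a b, HasDerivAt m (m' r) r)
    (hg : ∀ r ∈ Set.Icc a b, 0 < g r) (hm : ∀ r ∈ Set.Icc a b, 1 ≤ m r)
    (hode : ∀ r ∈ Set.Icc a b,
      (1 / g r - 1 / (g r) ^ 3) * g' r + (1 / m r - 1 / (m r) ^ 3) * m' r +
        (1 / τ) * (1 / g r - 1 / m r) = 4 / r) :
    AntitoneOn (fun s => w (g s) + w (m s) - 4 * Real.log s - s / τ) (Set.Icc a b) := by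
  have hderiv : ∀ r ∈ Set.Icc a b, HasDerivAt (fun s => w (g s) + w (m s) - 4 * Real.log s - s / τ)
      (-(1 / τ) * (1 / g r - 1 / m r + 1)) r := by
    intro r hr
    have hr0 : r ≠ 0 := (ha.trans_le hr.1).ne'
    refine ((((hgd r hr).w_comp (hg r hr).ne').fun_add
      ((hmd r hr).w_comp (by linarith [hm r hr]))).fun_sub
      ((Real.hasDerivAt_log hr0).const_mul 4)).fun_sub
      ((hasDerivAt_id' r).div_const τ) |>.congr_deriv ?_
    have := hode r hr
    field_simp at this ⊢
    linarith
  refine antitoneOn_of_hasDerivWithinAt_nonpos (convex_Icc a b)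
    (fun r hr => (hderiv r hr).continuousAt.continuousWithinAt)
    (fun r hr => (hderiv r (interior_subset hr)).hasDerivWithinAt) fun r hr => ?_
  have hr := interior_subset hr
  have hg_inv : 0 < 1 / g r := one_div_pos.mpr (hg r hr)
  have hm_inv : 1 / m r ≤ 1 := by rw [div_le_one (by linarith [hm r hr])]; exact hm r hr
  rw [neg_mul, neg_nonpos]
  exact mul_nonneg (one_div_pos.mpr hτ).le (by linarith)

theorem ode_integrated_inequality_general (ε₀ τ : ℝ) (hε₀ : ε₀ ∈ Set.Ioo (0 : ℝ) 1) (hτ : 0 < τ)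
    (g m g' m' : ℝ → ℝ)
    (hgd : ∀ r ∈ Set.Icc ε₀ 1, HasDerivAt g (g' r) r)
    (hmd : ∀ r ∈ Set.Icc ε₀ 1, HasDerivAt m (m' r) r)
    (hg : ∀ r ∈ Set.Icc ε₀ 1, 1 ≤ g r) (hm : ∀ r ∈ Set.Icc ε₀ 1, 1 < m r)
    (hg0 : g ε₀ = 1)
    (hode : ∀ r ∈ Set.Icc ε₀ 1,
      (1 / g r - 1 / (g r) ^ 3) * g' r + (1 / m r - 1 / (m r) ^ 3) * m' r +
        (1 / τ) * (1 / g r - 1 / m r) = 4 / r) :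
    ∀ r ∈ Set.Icc ε₀ 1,
      w (m r) - w (m ε₀) ≤ -w (g r) + 1 / 2 + 1 / τ - 4 * Real.log ε₀ := by
  intro r hr
  have hε₀r : ε₀ ∈ Set.Icc ε₀ 1 := ⟨le_rfl, hr.1.trans hr.2⟩
  have hV := antitoneOn_w_add_w_sub_log_sub_div hε₀.1 hτ hgd hmd
    (fun s hs => zero_lt_one.trans_le (hg s hs)) (fun s hs => (hm s hs).le) hode hε₀r hr hr.1
  have hlog : Real.log r ≤ 0 := Real.log_nonpos (hε₀.1.trans_le hr.1).le hr.2
  have hdrift : r / τ - ε₀ / τ ≤ 1 / τ := by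
    rw [← sub_div]; exact div_le_div_of_nonneg_right (by linarith [hε₀.1, hr.2]) hτ.le
  simp only [hg0, w_one] at hV
  linarith

theorem ode_integrated_inequality (ε₀ τ : ℝ) (hε₀ : ε₀ ∈ Set.Ioo (0 : ℝ) 1) (hτ : 0 < τ)
    (g m g' m' : ℝ → ℝ)
    (hg' : ContinuousOn g' (Set.Icc ε₀ 1)) (hm' : ContinuousOn m' (Set.Icc ε₀ 1))
    (hgd : ∀ r ∈ Set.Icc ε₀ 1, HasDerivAt g (g' r) r)
    (hmd : ∀ r ∈ Set.Icc ε₀ 1, HasDerivAt m (m' r) r)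
    (hg : ∀ r ∈ Set.Icc ε₀ 1, 1 ≤ g r) (hm : ∀ r ∈ Set.Icc ε₀ 1, 1 < m r)
    (hg0 : g ε₀ = 1)
    (hode : ∀ r ∈ Set.Icc ε₀ 1,
      (1 / g r - 1 / (g r) ^ 3) * g' r + (1 / m r - 1 / (m r) ^ 3) * m' r +
        (1 / τ) * (1 / g r - 1 / m r) = 4 / r) :
    ∀ r ∈ Set.Icc ε₀ 1,
      w (m r) - w (m ε₀) ≤ -w (g r) + 1 / 2 + 1 / τ - 4 * Real.log ε₀ :=
  ode_integrated_inequality_general ε₀ τ hε₀ hτ g m g' m' hgd hmd hg hm hg0 hode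
end

section
/- (Ill-posedness, key quantitative step.) Let ε₀ ∈ (0,1), τ > 0, ḡ > 1, and let g : [ε₀,1] → ℝ be C¹ with 1 ≤ g ≤ ḡ. Let p ∈ (ε₀ + (1-ε₀)/2, 1), q ∈ (ε₀, ε₀ + (1-ε₀)/4), and suppose W : [ε₀,1] → ℝ is C¹ with W'(q) = -(1/q²)∫_q^p (g(s) - m(s) - B(s) + 2) ds + (1/(τq²))(p²/g(p) - q²/g(q)), where m ≥ 1 and B(s) ≥ B* on (ε₀+(1-ε₀)/4, ε₀+3(1-ε₀)/4) with B ≥ 0 elsewhere. Then W'(q) ≥ (1/q²)((1-ε₀)B*/4 - (ḡ + 2)) - 1/τ. -/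
/-!
Write the integrand as `(g - m + 2) - B`. Since `1 ≤ m` and `g ≤ ḡ`, the first part is at most
`ḡ + 1` on `[q, p]`, an interval of length at most one, so its integral is at most `ḡ + 1`.
Since `B ≥ 0`, the integral of `B` over `[q, p]` is at least its integral over the middle quarter
`(ε₀ + (1 - ε₀)/4, ε₀ + (1 - ε₀)/2)`, where `B ≥ B*`. Finally `g ≥ 1` gives
`p²/g(p) - q²/g(q) ≥ -q²`, so the boundary term is at least `-1/τ`.
-/

open MeasureTheory Set

namespace intervalIntegral

variable {f : ℝ → ℝ} {a b C : ℝ}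

theorem integral_le_of_le_const_of_sub_le_one (hab : a ≤ b) (hba : b - a ≤ 1) (hC : 0 ≤ C)
    (hf : IntervalIntegrable f volume a b) (hfC : ∀ x ∈ Icc a b, f x ≤ C) :
    ∫ x in a..b, f x ≤ C :=
  calc ∫ x in a..b, f x ≤ ∫ _ in a..b, C :=
        integral_mono_on hab hf intervalIntegrable_const hfC
    _ = (b - a) * C := by rw [integral_const, smul_eq_mul]
    _ ≤ C := mul_le_of_le_one_left hC hba

theorem mul_le_integral_of_nonneg_of_le_on_Ioo {c d : ℝ} (hab : a ≤ b) (hbc : b ≤ c) (hcd : c ≤ d)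
    (hf : IntervalIntegrable f volume a d) (hf0 : ∀ x ∈ Icc a d, 0 ≤ f x)
    (hfC : ∀ x ∈ Ioo b c, C ≤ f x) :
    (c - b) * C ≤ ∫ x in a..d, f x := by
  have hf_bc : IntervalIntegrable f volume b c :=
    hf.mono_set (uIcc_subset_uIcc (mem_uIcc_of_le hab (hbc.trans hcd))
      (mem_uIcc_of_le (hab.trans hbc) hcd))
  have hf0_ae : 0 ≤ᵐ[volume.restrict (Ioc a d)] f :=
    (ae_restrict_iff' measurableSet_Ioc).2 (Filter.Eventually.of_forall
      fun x hx => hf0 x (Ioc_subset_Icc_self hx))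
  calc (c - b) * C = ∫ _ in b..c, C := by rw [integral_const, smul_eq_mul]
    _ ≤ ∫ x in b..c, f x := integral_mono_on_of_le_Ioo hbc intervalIntegrable_const hf_bc hfC
    _ ≤ ∫ x in a..d, f x := integral_mono_interval hab hbc hcd hf0_ae hf

end intervalIntegral

theorem neg_sq_le_sq_div_sub_sq_div {x y a b : ℝ} (ha : 1 ≤ a) (hb : 1 ≤ b) :
    -y ^ 2 ≤ x ^ 2 / a - y ^ 2 / b := by
  have hx : 0 ≤ x ^ 2 / a := div_nonneg (sq_nonneg x) (zero_le_one.trans ha)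
  have hy : y ^ 2 / b ≤ y ^ 2 := div_le_self (sq_nonneg y) hb
  linarith

theorem illposed_key_step_general (ε₀ τ gbar Bstar : ℝ) (p q : ℝ)
    (hε₀ : ε₀ ∈ Set.Ioo (0 : ℝ) 1) (hτ : 0 < τ)
    (hp : p ∈ Set.Ioo (ε₀ + (1 - ε₀) / 2) 1)
    (hq : q ∈ Set.Ioo ε₀ (ε₀ + (1 - ε₀) / 4))
    (g m B : ℝ → ℝ) (W : ℝ → ℝ)
    (hgC1 : ContDiffOn ℝ 1 g (Set.Icc ε₀ 1))
    (hg : ∀ r ∈ Set.Icc ε₀ 1, 1 ≤ g r ∧ g r ≤ gbar)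
    (hm : ∀ r ∈ Set.Icc ε₀ 1, 1 ≤ m r)
    (hB_mid : ∀ r ∈ Set.Ioo (ε₀ + (1 - ε₀) / 4) (ε₀ + 3 * (1 - ε₀) / 4), Bstar ≤ B r)
    (hB_nonneg : ∀ r ∈ Set.Icc ε₀ 1, 0 ≤ B r)
    (hmInt : IntervalIntegrable m volume q p)
    (hBInt : IntervalIntegrable B volume q p)
    (hW'q : deriv W q =
      -(1 / q ^ 2) * (∫ s in q..p, (g s - m s - B s + 2)) +
        (1 / (τ * q ^ 2)) * (p ^ 2 / g p - q ^ 2 / g q)) :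
    deriv W q ≥ (1 / q ^ 2) * ((1 - ε₀) * Bstar / 4 - (gbar + 2)) - 1 / τ := by
  obtain ⟨hε₀0, hε₀1⟩ := hε₀
  obtain ⟨hp_lo, hp_hi⟩ := hp
  obtain ⟨hq_lo, hq_hi⟩ := hq
  have hqp : q ≤ p := by linarith
  have hsub : Icc q p ⊆ Icc ε₀ 1 := Icc_subset_Icc hq_lo.le hp_hi.le
  have hgInt : IntervalIntegrable g volume q p :=
    (hgC1.continuousOn.mono (by rwa [uIcc_of_le hqp])).intervalIntegrable
  have hrest : ∫ s in q..p, (g s - m s + 2) ≤ gbar + 1 :=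
    intervalIntegral.integral_le_of_le_const_of_sub_le_one hqp (by linarith)
      (by linarith [hg ε₀ ⟨le_rfl, hε₀1.le⟩])
      ((hgInt.sub hmInt).add intervalIntegrable_const)
      fun x hx => by linarith [(hg x (hsub hx)).2, hm x (hsub hx)]
  have hBmass : (1 - ε₀) * Bstar / 4 ≤ ∫ s in q..p, B s := by
    have h := intervalIntegral.mul_le_integral_of_nonneg_of_le_on_Ioo hq_hi.le (by linarith)
      hp_lo.le hBInt
      (fun x hx => hB_nonneg x (hsub hx))
      fun x hx => hB_mid x ⟨hx.1, by linarith [hx.2]⟩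
    linarith
  have hsplit : ∫ s in q..p, (g s - m s - B s + 2) =
      (∫ s in q..p, (g s - m s + 2)) - ∫ s in q..p, B s := by
    rw [← intervalIntegral.integral_sub ((hgInt.sub hmInt).add intervalIntegrable_const) hBInt]
    congr 1 with s
    ring
  have hbdry := neg_sq_le_sq_div_sub_sq_div (x := p) (y := q) (hg p ⟨by linarith, hp_hi.le⟩).1
    (hg q ⟨hq_lo.le, by linarith⟩).1
  have hq0 : q ≠ 0 := (hε₀0.trans hq_lo).ne'
  calc deriv W q = 1 / q ^ 2 * ((∫ s in q..p, B s) - ∫ s in q..p, (g s - m s + 2)) +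
        1 / (τ * q ^ 2) * (p ^ 2 / g p - q ^ 2 / g q) := by rw [hW'q, hsplit]; ring
    _ ≥ 1 / q ^ 2 * ((1 - ε₀) * Bstar / 4 - (gbar + 2)) + 1 / (τ * q ^ 2) * (-q ^ 2) := by
        gcongr
        linarith
    _ = (1 / q ^ 2) * ((1 - ε₀) * Bstar / 4 - (gbar + 2)) - 1 / τ := by field_simp; ring

theorem illposed_key_step (ε₀ τ gbar Bstar : ℝ) (p q : ℝ)
    (hε₀ : ε₀ ∈ Set.Ioo (0 : ℝ) 1) (hτ : 0 < τ) (hgbar : 1 < gbar)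
    (hp : p ∈ Set.Ioo (ε₀ + (1 - ε₀) / 2) 1)
    (hq : q ∈ Set.Ioo ε₀ (ε₀ + (1 - ε₀) / 4))
    (g m B : ℝ → ℝ) (W : ℝ → ℝ)
    (hgC1 : ContDiffOn ℝ 1 g (Set.Icc ε₀ 1))
    (hg : ∀ r ∈ Set.Icc ε₀ 1, 1 ≤ g r ∧ g r ≤ gbar)
    (hm : ∀ r ∈ Set.Icc ε₀ 1, 1 ≤ m r)
    (hB_mid : ∀ r ∈ Set.Ioo (ε₀ + (1 - ε₀) / 4) (ε₀ + 3 * (1 - ε₀) / 4), Bstar ≤ B r)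
    (hB_nonneg : ∀ r ∈ Set.Icc ε₀ 1, 0 ≤ B r)
    (hmInt : IntervalIntegrable m volume q p)
    (hBInt : IntervalIntegrable B volume q p)
    (hWC1 : ContDiffOn ℝ 1 W (Set.Icc ε₀ 1))
    (hW'q : deriv W q =
      -(1 / q ^ 2) * (∫ s in q..p, (g s - m s - B s + 2)) +
        (1 / (τ * q ^ 2)) * (p ^ 2 / g p - q ^ 2 / g q)) :
    deriv W q ≥ (1 / q ^ 2) * ((1 - ε₀) * Bstar / 4 - (gbar + 2)) - 1 / τ :=
  illposed_key_step_general ε₀ τ gbar Bstar p q hε₀ hτ hp hq g m B W hgC1 hg hm hB_mid hB_nonneg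
    hmInt hBInt hW'q
end
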